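/- arXiv:2410.16982 — 2 statements merged into one kernel-verified Lean document; each statement's English description precedes it below -/
import Mathlib

section
/- For every n ∈ ℕ, the linear map G : S_n → S_n defined by G(X) = Σ_{α ∈ 𝕀 ∪ 𝕀_D} ⟨X, w_α⟩ v_α has operator norm (with respect to the Frobenius norm on S_n) equal to 1. -/
namespace EDG

open Matrix

/-- Frobenius (trace) inner product on real `n × n` matrices: `⟨A, B⟩ = tr (Aᵀ B)`. -/
noncomputable def frob {n : ℕ} (A B : Matrix (Fin n) (Fin n) ℝ) : ℝ :=
  Matrix.trace (Aᵀ * B)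

/-- Frobenius norm. -/
noncomputable def frobNorm {n : ℕ} (A : Matrix (Fin n) (Fin n) ℝ) : ℝ :=
  Real.sqrt (frob A A)

/-- The `i`-th standard basis vector of `ℝⁿ`. -/
def eV (n : ℕ) (i : Fin n) : Fin n → ℝ := Pi.single i 1

/-- The all-ones vector of `ℝⁿ`. -/
def onesV (n : ℕ) : Fin n → ℝ := fun _ => 1

/-- `a_i = e_i − (1/n) 𝟙`. -/
noncomputable def aV (n : ℕ) (i : Fin n) : Fin n → ℝ :=
  eV n i - ((n : ℝ))⁻¹ • onesV n

/-- `w_{(i,j)} = e_i e_iᵀ + e_j e_jᵀ − e_i e_jᵀ − e_j e_iᵀ` (for `i < j`). -/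
noncomputable def wOff (n : ℕ) (i j : Fin n) : Matrix (Fin n) (Fin n) ℝ :=
  vecMulVec (eV n i) (eV n i) + vecMulVec (eV n j) (eV n j)
    - vecMulVec (eV n i) (eV n j) - vecMulVec (eV n j) (eV n i)

/-- `w_{(i,i)} = (1/2)(e_i 𝟙ᵀ + 𝟙 e_iᵀ)`. -/
noncomputable def wDiag (n : ℕ) (i : Fin n) : Matrix (Fin n) (Fin n) ℝ :=
  ((2 : ℝ))⁻¹ • (vecMulVec (eV n i) (onesV n) + vecMulVec (onesV n) (eV n i))

/-- `v_{(i,j)} = −(1/2)(a_i a_jᵀ + a_j a_iᵀ)` (for `i < j`). -/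
noncomputable def vOff (n : ℕ) (i j : Fin n) : Matrix (Fin n) (Fin n) ℝ :=
  (-((2 : ℝ))⁻¹) • (vecMulVec (aV n i) (aV n j) + vecMulVec (aV n j) (aV n i))

/-- `v_{(i,i)} = e_i e_iᵀ − a_i a_iᵀ`. -/
noncomputable def vDiag (n : ℕ) (i : Fin n) : Matrix (Fin n) (Fin n) ℝ :=
  vecMulVec (eV n i) (eV n i) - vecMulVec (aV n i) (aV n i)
/-- The index set `𝕀 = {(i,j) : i < j}` of strictly upper-triangular positions. -/
abbrev Idx (n : ℕ) : Type := {p : Fin n × Fin n // p.1 < p.2}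

/-- `w_α` for `α ∈ 𝕀`. -/
noncomputable def wI {n : ℕ} (α : Idx n) : Matrix (Fin n) (Fin n) ℝ :=
  wOff n α.1.1 α.1.2

/-- `v_α` for `α ∈ 𝕀`. -/
noncomputable def vI {n : ℕ} (α : Idx n) : Matrix (Fin n) (Fin n) ℝ :=
  vOff n α.1.1 α.1.2
/-- Operator norm (w.r.t. the Frobenius norm) of a map on the space `S_n` of
symmetric matrices: supremum of `‖Q X‖_F` over symmetric `X` with `‖X‖_F ≤ 1`. -/
noncomputable def opNormSym (n : ℕ)
    (Q : Matrix (Fin n) (Fin n) ℝ → Matrix (Fin n) (Fin n) ℝ) : ℝ :=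
  sSup {c : ℝ | ∃ X : Matrix (Fin n) (Fin n) ℝ, X.IsSymm ∧ frobNorm X ≤ 1 ∧ c = frobNorm (Q X)}

variable {n : ℕ}

lemma frob_eq (A B : Matrix (Fin n) (Fin n) ℝ) :
    frob A B = ∑ k, ∑ l, A k l * B k l := by
  rw [frob, Matrix.trace]
  simp only [Matrix.diag_apply, Matrix.mul_apply, Matrix.transpose_apply]
  rw [Finset.sum_comm]

lemma eV_apply (i k : Fin n) : eV n i k = if k = i then 1 else 0 := by
  simp [eV, Pi.single_apply]

lemma aV_apply (i k : Fin n) : aV n i k = (if k = i then 1 else 0) - (n : ℝ)⁻¹ := by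
  simp [aV, eV_apply, onesV]

lemma aV_eq (i k : Fin n) : aV n i k = eV n i k - (n : ℝ)⁻¹ := by
  simp [aV, onesV]

lemma sum_aV (hn : 1 ≤ n) (t : Fin n) : ∑ i, aV n i t = 0 := by
  have h0 : (n : ℝ) ≠ 0 := Nat.cast_ne_zero.mpr (by omega)
  simp [aV_apply, Finset.sum_sub_distrib, Finset.card_univ, h0]

lemma sum_aV_mul (f : Fin n → ℝ) (t : Fin n) :
    ∑ i, aV n i t * f i = f t - (n : ℝ)⁻¹ * ∑ i, f i := by
  simp [aV_apply, sub_mul, Finset.sum_sub_distrib, Finset.mul_sum]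

lemma sum_eV_mul (f : Fin n → ℝ) (t : Fin n) :
    ∑ i, eV n i t * f i = f t := by
  simp [eV_apply]

lemma frob_vmv (X : Matrix (Fin n) (Fin n) ℝ) (u v : Fin n → ℝ) :
    frob X (vecMulVec u v) = ∑ k, ∑ l, X k l * (u k * v l) := by
  rw [frob_eq]; simp [vecMulVec_apply]

lemma frob_X_ee (X : Matrix (Fin n) (Fin n) ℝ) (i j : Fin n) :
    frob X (vecMulVec (eV n i) (eV n j)) = X i j := by
  rw [frob_vmv]; simp [eV_apply]

lemma frob_X_eone (X : Matrix (Fin n) (Fin n) ℝ) (i : Fin n) :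
    frob X (vecMulVec (eV n i) (onesV n)) = ∑ l, X i l := by
  rw [frob_vmv]; simp [eV_apply, onesV, Finset.sum_comm]

lemma frob_X_onee (X : Matrix (Fin n) (Fin n) ℝ) (i : Fin n) :
    frob X (vecMulVec (onesV n) (eV n i)) = ∑ k, X k i := by
  rw [frob_vmv]; simp [eV_apply, onesV]

lemma frob_add (X A B : Matrix (Fin n) (Fin n) ℝ) : frob X (A + B) = frob X A + frob X B := by
  simp [frob, Matrix.mul_add]

lemma frob_sub (X A B : Matrix (Fin n) (Fin n) ℝ) : frob X (A - B) = frob X A - frob X B := by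
  simp [frob, Matrix.mul_sub]

lemma frob_smul (X A : Matrix (Fin n) (Fin n) ℝ) (c : ℝ) : frob X (c • A) = c * frob X A := by
  simp [frob, Matrix.mul_smul]

lemma frob_wOff (X : Matrix (Fin n) (Fin n) ℝ) (i j : Fin n) :
    frob X (wOff n i j) = X i i + X j j - X i j - X j i := by
  rw [wOff, frob_sub, frob_sub, frob_add, frob_X_ee, frob_X_ee, frob_X_ee, frob_X_ee]

lemma frob_wDiag (X : Matrix (Fin n) (Fin n) ℝ) (hX : X.IsSymm) (i : Fin n) :
    frob X (wDiag n i) = ∑ m, X i m := by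
  rw [wDiag, frob_smul, frob_add, frob_X_eone, frob_X_onee]
  have h : ∀ m, X m i = X i m := fun m => hX.apply i m
  rw [Finset.sum_congr rfl fun m _ => h m]
  ring

lemma vOff_apply (i j k l : Fin n) :
    vOff n i j k l = -((2:ℝ)⁻¹) * (aV n i k * aV n j l + aV n j k * aV n i l) := by
  simp [vOff, vecMulVec_apply]

lemma vDiag_apply (i k l : Fin n) :
    vDiag n i k l = eV n i k * eV n i l - aV n i k * aV n i l := by
  simp [vDiag, Matrix.sub_apply, vecMulVec_apply]

lemma sum_Idx_eq (F : Fin n → Fin n → ℝ) (hsymm : ∀ i j, F i j = F j i)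
    (hdiag : ∀ i, F i i = 0) :
    ∑ α : Idx n, F α.1.1 α.1.2 = (2:ℝ)⁻¹ * ∑ i, ∑ j, F i j := by
  have h1 : ∑ α : Idx n, F α.1.1 α.1.2
      = ∑ p ∈ Finset.univ.filter (fun p : Fin n × Fin n => p.1 < p.2), F p.1 p.2 := by
    rw [← Finset.subtype_univ]
    exact Finset.sum_subtype_eq_sum_filter (fun p : Fin n × Fin n => F p.1 p.2)
  have hfull : ∑ i, ∑ j, F i j = ∑ p : Fin n × Fin n, F p.1 p.2 :=
    (Fintype.sum_prod_type (fun p : Fin n × Fin n => F p.1 p.2)).symm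
  have hswap : ∑ p ∈ Finset.univ.filter (fun p : Fin n × Fin n => ¬ p.1 < p.2), F p.1 p.2
      = ∑ p ∈ Finset.univ.filter (fun p : Fin n × Fin n => p.1 ≤ p.2), F p.1 p.2 := by
    refine Finset.sum_equiv (Equiv.prodComm (Fin n) (Fin n)) ?_ ?_
    · intro p; simp [not_lt]
    · intro p hp; exact hsymm p.1 p.2
  have hle : ∑ p ∈ Finset.univ.filter (fun p : Fin n × Fin n => p.1 ≤ p.2), F p.1 p.2
      = ∑ p ∈ Finset.univ.filter (fun p : Fin n × Fin n => p.1 < p.2), F p.1 p.2 := by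
    refine (Finset.sum_subset ?_ ?_).symm
    · intro p hp; simp only [Finset.mem_filter, Finset.mem_univ, true_and] at hp ⊢
      exact le_of_lt hp
    · intro p hp hnp
      simp only [Finset.mem_filter, Finset.mem_univ, true_and] at hp hnp
      have hpe : p.1 = p.2 := le_antisymm hp (not_lt.mp hnp)
      rw [show F p.1 p.2 = F p.1 p.1 by rw [hpe]]
      exact hdiag p.1
  rw [h1, hfull, ← Finset.sum_filter_add_sum_filter_not (Finset.univ : Finset (Fin n × Fin n))
      (fun p => p.1 < p.2) (fun p => F p.1 p.2), hswap, hle]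
  ring

lemma G_eq (hn : 1 ≤ n) (X : Matrix (Fin n) (Fin n) ℝ) (hX : X.IsSymm) :
    (∑ α : Idx n, frob X (wI α) • vI α) + ∑ i, frob X (wDiag n i) • vDiag n i = X := by
  have hs : ∀ p q : Fin n, X q p = X p q := fun p q => hX.apply p q
  ext k l
  rw [Matrix.add_apply, Matrix.sum_apply, Matrix.sum_apply]
  simp only [Matrix.smul_apply, smul_eq_mul]
  have h1 : ∑ α : Idx n, frob X (wI α) * vI α k l
      = ∑ α : Idx n, frob X (wOff n α.1.1 α.1.2) * vOff n α.1.1 α.1.2 k l := rfl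
  rw [h1]
  have hoff : ∑ α : Idx n, frob X (wOff n α.1.1 α.1.2) * vOff n α.1.1 α.1.2 k l
      = (2:ℝ)⁻¹ * ∑ i, ∑ j, frob X (wOff n i j) * vOff n i j k l := by
    refine sum_Idx_eq (fun i j => frob X (wOff n i j) * vOff n i j k l) ?_ ?_
    · intro i j; rw [frob_wOff, frob_wOff, vOff_apply, vOff_apply]; ring
    · intro i; rw [frob_wOff]; ring
  rw [hoff]
  have hinner : ∀ i : Fin n, ∑ j, frob X (wOff n i j) * vOff n i j k l
      = (-(2:ℝ)⁻¹ * (X i i * aV n i k)) * (∑ j, aV n j l)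
      + (-(2:ℝ)⁻¹ * (X i i * aV n i l)) * (∑ j, aV n j k)
      + (-(2:ℝ)⁻¹ * aV n i k) * (∑ j, aV n j l * X j j)
      + (-(2:ℝ)⁻¹ * aV n i l) * (∑ j, aV n j k * X j j)
      + (∑ j, aV n j l * X i j)
      * aV n i k
      + (∑ j, aV n j k * X i j) * aV n i l := by
    intro i
    rw [Finset.mul_sum, Finset.mul_sum, Finset.mul_sum, Finset.mul_sum,
      Finset.sum_mul, Finset.sum_mul,
      ← Finset.sum_add_distrib, ← Finset.sum_add_distrib, ← Finset.sum_add_distrib,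
      ← Finset.sum_add_distrib, ← Finset.sum_add_distrib]
    refine Finset.sum_congr rfl fun j _ => ?_
    rw [frob_wOff, vOff_apply, hs i j]
    ring
  have hcol : ∀ t : Fin n, ∑ i, X i t = ∑ m, X t m :=
    fun t => Finset.sum_congr rfl fun i _ => hs t i
  have hmain : ∑ i, ∑ j, frob X (wOff n i j) * vOff n i j k l
      = (-(2:ℝ)⁻¹ * (∑ j, aV n j l * X j j)) * (∑ i, aV n i k)
      + (-(2:ℝ)⁻¹ * (∑ j, aV n j k * X j j)) * (∑ i, aV n i l)
      + (∑ i, aV n i k * X i l) + (∑ i, aV n i l * X i k)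
      - (n:ℝ)⁻¹ * (∑ i, aV n i k * (∑ j, X i j))
      - (n:ℝ)⁻¹ * (∑ i, aV n i l * (∑ j, X i j)) := by
    calc ∑ i, ∑ j, frob X (wOff n i j) * vOff n i j k l
        = ∑ i, ( (-(2:ℝ)⁻¹ * (∑ j, aV n j l * X j j)) * aV n i k
          + (-(2:ℝ)⁻¹ * (∑ j, aV n j k * X j j)) * aV n i l
          + aV n i k * X i l + aV n i l * X i k
          - (n:ℝ)⁻¹ * (aV n i k * (∑ j, X i j))
          - (n:ℝ)⁻¹ * (aV n i l * (∑ j, X i j)) ) := by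
          refine Finset.sum_congr rfl fun i _ => ?_
          rw [hinner i, sum_aV hn l, sum_aV hn k,
            sum_aV_mul (fun j => X i j) l, sum_aV_mul (fun j => X i j) k]
          ring
      _ = _ := by
          simp only [Finset.sum_add_distrib, Finset.sum_sub_distrib, ← Finset.mul_sum,
            ← Finset.sum_mul]
  rw [hmain, sum_aV hn k, sum_aV hn l,
    sum_aV_mul (fun i => X i l) k, sum_aV_mul (fun i => X i k) l,
    sum_aV_mul (fun i => ∑ j, X i j) k, sum_aV_mul (fun i => ∑ j, X i j) l]
  have hdiagsum : ∑ i, frob X (wDiag n i) * vDiag n i k l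
      = (n:ℝ)⁻¹ * (∑ m, X k m) + (n:ℝ)⁻¹ * (∑ m, X l m)
        - ((n:ℝ)⁻¹ * (n:ℝ)⁻¹) * (∑ i, ∑ m, X i m) := by
    calc ∑ i, frob X (wDiag n i) * vDiag n i k l
        = ∑ i, ( (n:ℝ)⁻¹ * (eV n i k * (∑ m, X i m))
            + (n:ℝ)⁻¹ * (eV n i l * (∑ m, X i m))
            - ((n:ℝ)⁻¹ * (n:ℝ)⁻¹) * (∑ m, X i m) ) := by
          refine Finset.sum_congr rfl fun i _ => ?_
          rw [frob_wDiag X hX, vDiag_apply, aV_eq i k, aV_eq i l]; ring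
      _ = _ := by
          simp only [Finset.sum_add_distrib, Finset.sum_sub_distrib, ← Finset.mul_sum]
          rw [sum_eV_mul (fun i => ∑ m, X i m) k, sum_eV_mul (fun i => ∑ m, X i m) l]
  rw [hdiagsum, hs k l, hcol l, hcol k]
  ring


/-- the linear map `G(X) = Σ_{α ∈ 𝕀 ∪ 𝕀_D} ⟨X, w_α⟩ v_α` on `S_n` has
operator norm (w.r.t. the Frobenius norm) equal to `1`. -/
theorem dual_expansion_opNorm_eq_one (n : ℕ) (hn : 1 ≤ n) :
    opNormSym n (fun X =>
      (∑ α : Idx n, frob X (wI α) • vI α) + ∑ i : Fin n, frob X (wDiag n i) • vDiag n i)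
      = 1 := by
  have key : ∀ X : Matrix (Fin n) (Fin n) ℝ, X.IsSymm →
      ((∑ α : Idx n, frob X (wI α) • vI α) + ∑ i : Fin n, frob X (wDiag n i) • vDiag n i)
        = X := fun X hX => G_eq hn X hX
  set i0 : Fin n := ⟨0, hn⟩ with hi0
  set X₀ : Matrix (Fin n) (Fin n) ℝ := vecMulVec (eV n i0) (eV n i0) with hX₀
  have hX₀s : X₀.IsSymm := by
    rw [Matrix.IsSymm]
    ext k l
    simp [hX₀, Matrix.transpose_apply, vecMulVec_apply, mul_comm]
  have hf : frob X₀ X₀ = 1 := by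
    rw [frob_eq]
    simp [hX₀, vecMulVec_apply, eV_apply]
  have hnorm : frobNorm X₀ = 1 := by rw [frobNorm, hf]; exact Real.sqrt_one
  rw [opNormSym]
  apply le_antisymm
  · apply Real.sSup_le ?_ zero_le_one
    intro c hc
    obtain ⟨X, hXs, hXn, rfl⟩ := hc
    simp only [key X hXs]
    exact hXn
  · apply le_csSup
    · refine ⟨1, ?_⟩
      rintro c ⟨X, hXs, hXn, rfl⟩
      simp only [key X hXs]
      exact hXn
    · refine ⟨X₀, hX₀s, le_of_eq hnorm, ?_⟩
      simp only [key X₀ hX₀s]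
      exact hnorm.symm

end EDG
end

section
/- Let T ⊆ S_n be the tangent space to the manifold of symmetric rank-r matrices at some rank-r matrix, with Frobenius-orthogonal projection P_T and orthogonal complement projection P_{T⊥} = Id − P_T, and let Q_Ω be a sampling operator from a multiset Ω ⊆ 𝕀 of size m. Assume ‖P_T Q_Ω* P_T − P_T‖_{S∞} ≤ 2/5, ‖Q_Ω‖_{S∞} ≤ 20 L √(log n / m) + 1, and L √(log n / m) ≥ 1. Then every η ∈ S_n in the null space of Q_Ω (i.e., Q_Ω(η) = 0) satisfies ‖η‖_F ≤ 21√5 · L √(log n / m) · ‖P_{T⊥}(η)‖_F. -/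
namespace EDG

open Matrix

/-- `L = n(n−1)/2`, the cardinality of `𝕀`, as a real number. -/
noncomputable def Lr (n : ℕ) : ℝ := (n : ℝ) * ((n : ℝ) - 1) / 2
/-- The sampling operator
`Q_Ω(X) = (L/m) Σ_{ℓ} ⟨X, w_{α_ℓ}⟩ v_{α_ℓ} + Σ_i ⟨X, w_{(i,i)}⟩ v_{(i,i)}`,
for a multiset `Ω = (α_1,…,α_m)` of elements of `𝕀` encoded as `ω : Fin m → Idx n`. -/
noncomputable def QOp (n m : ℕ) (ω : Fin m → Idx n)
    (X : Matrix (Fin n) (Fin n) ℝ) : Matrix (Fin n) (Fin n) ℝ :=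
  (Lr n / (m : ℝ)) • ∑ ℓ : Fin m, frob X (wI (ω ℓ)) • vI (ω ℓ)
    + ∑ i : Fin n, frob X (wDiag n i) • vDiag n i

/-- The adjoint `Q_Ω*` of the sampling operator w.r.t. the Frobenius inner product:
`Q_Ω*(X) = (L/m) Σ_{ℓ} ⟨X, v_{α_ℓ}⟩ w_{α_ℓ} + Σ_i ⟨X, v_{(i,i)}⟩ w_{(i,i)}`. -/
noncomputable def QAdj (n m : ℕ) (ω : Fin m → Idx n)
    (X : Matrix (Fin n) (Fin n) ℝ) : Matrix (Fin n) (Fin n) ℝ :=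
  (Lr n / (m : ℝ)) • ∑ ℓ : Fin m, frob X (vI (ω ℓ)) • wI (ω ℓ)
    + ∑ i : Fin n, frob X (vDiag n i) • wDiag n i
/-- The tangent space `T_Y = {Z Y + Y Zᵀ : Z ∈ ℝ^{n×n}}` to the manifold of symmetric
rank-`r` matrices at a symmetric rank-`r` matrix `Y`. -/
def tangentSpace {n : ℕ} (Y : Matrix (Fin n) (Fin n) ℝ) :
    Submodule ℝ (Matrix (Fin n) (Fin n) ℝ) where
  carrier := {A | ∃ Z : Matrix (Fin n) (Fin n) ℝ, A = Z * Y + Y * Zᵀ}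
  add_mem' := by
    rintro a b ⟨Z₁, rfl⟩ ⟨Z₂, rfl⟩
    exact ⟨Z₁ + Z₂, by rw [Matrix.add_mul, Matrix.transpose_add, Matrix.mul_add]; abel⟩
  zero_mem' := ⟨0, by simp⟩
  smul_mem' := by
    rintro c a ⟨Z, rfl⟩
    exact ⟨c • Z, by
      rw [Matrix.transpose_smul, Matrix.smul_mul, Matrix.mul_smul, smul_add]⟩

/-- `P` is the orthogonal projection onto the subspace `T` w.r.t. the Frobenius
inner product: it maps into `T`, fixes `T`, and is self-adjoint. -/
def IsOrthProjOnto {n : ℕ} (T : Submodule ℝ (Matrix (Fin n) (Fin n) ℝ))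
    (P : Matrix (Fin n) (Fin n) ℝ →ₗ[ℝ] Matrix (Fin n) (Fin n) ℝ) : Prop :=
  (∀ X, P X ∈ T) ∧ (∀ X ∈ T, P X = X) ∧ (∀ X Y, frob (P X) Y = frob X (P Y))
section Helpers

variable {n : ℕ}

/-- Matrices as vectors in Euclidean space, carrying the Frobenius structure. -/
noncomputable def toE : Matrix (Fin n) (Fin n) ℝ →ₗ[ℝ] EuclideanSpace ℝ (Fin n × Fin n) where
  toFun A := WithLp.toLp 2 (fun p : Fin n × Fin n => A p.1 p.2)
  map_add' _ _ := rfl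
  map_smul' _ _ := rfl

@[simp] lemma toE_apply (A : Matrix (Fin n) (Fin n) ℝ) (p : Fin n × Fin n) :
    toE A p = A p.1 p.2 := rfl

lemma frob_eq_inner (A B : Matrix (Fin n) (Fin n) ℝ) :
    frob A B = inner ℝ (toE A) (toE B) := by
  simp only [frob, Matrix.trace, Matrix.diag, Matrix.mul_apply, Matrix.transpose_apply]
  rw [PiLp.inner_apply, Fintype.sum_prod_type, Finset.sum_comm]
  simp [toE_apply, RCLike.inner_apply, mul_comm]

lemma frobNorm_eq (A : Matrix (Fin n) (Fin n) ℝ) : frobNorm A = ‖toE A‖ := by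
  rw [frobNorm, frob_eq_inner, ← norm_eq_sqrt_real_inner]

lemma frobNorm_nonneg (A : Matrix (Fin n) (Fin n) ℝ) : 0 ≤ frobNorm A :=
  Real.sqrt_nonneg _

lemma frob_comm (A B : Matrix (Fin n) (Fin n) ℝ) : frob A B = frob B A := by
  rw [frob_eq_inner, frob_eq_inner, real_inner_comm]

lemma frob_self (A : Matrix (Fin n) (Fin n) ℝ) : frob A A = frobNorm A ^ 2 := by
  rw [frob_eq_inner, frobNorm_eq, real_inner_self_eq_norm_sq]

lemma abs_frob_le (A B : Matrix (Fin n) (Fin n) ℝ) :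
    |frob A B| ≤ frobNorm A * frobNorm B := by
  rw [frob_eq_inner, frobNorm_eq, frobNorm_eq]
  exact abs_real_inner_le_norm _ _

lemma frob_add_left (A B C : Matrix (Fin n) (Fin n) ℝ) :
    frob (A + B) C = frob A C + frob B C := by
  simp [frob_eq_inner, map_add, inner_add_left]

lemma frob_add_right (A B C : Matrix (Fin n) (Fin n) ℝ) :
    frob A (B + C) = frob A B + frob A C := by
  simp [frob_eq_inner, map_add, inner_add_right]

lemma frob_smul_left (c : ℝ) (A B : Matrix (Fin n) (Fin n) ℝ) :
    frob (c • A) B = c * frob A B := by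
  rw [frob_eq_inner, frob_eq_inner, LinearMap.map_smul, real_inner_smul_left]

lemma frob_smul_right (c : ℝ) (A B : Matrix (Fin n) (Fin n) ℝ) :
    frob A (c • B) = c * frob A B := by
  rw [frob_eq_inner, frob_eq_inner, LinearMap.map_smul, real_inner_smul_right]

lemma frob_sum_right {ι : Type*} (s : Finset ι) (A : Matrix (Fin n) (Fin n) ℝ)
    (B : ι → Matrix (Fin n) (Fin n) ℝ) :
    frob A (∑ k ∈ s, B k) = ∑ k ∈ s, frob A (B k) := by
  simp [frob_eq_inner, map_sum, inner_sum]

lemma frob_neg_left (A B : Matrix (Fin n) (Fin n) ℝ) : frob (-A) B = - frob A B := by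
  simp [frob_eq_inner, map_neg, inner_neg_left]

lemma frobNorm_smul (c : ℝ) (A : Matrix (Fin n) (Fin n) ℝ) :
    frobNorm (c • A) = |c| * frobNorm A := by
  rw [frobNorm_eq, frobNorm_eq, LinearMap.map_smul, norm_smul, Real.norm_eq_abs]

lemma frobNorm_add_le (A B : Matrix (Fin n) (Fin n) ℝ) :
    frobNorm (A + B) ≤ frobNorm A + frobNorm B := by
  rw [frobNorm_eq, frobNorm_eq, frobNorm_eq, map_add]
  exact norm_add_le _ _

lemma frobNorm_sum_le {ι : Type*} (s : Finset ι) (B : ι → Matrix (Fin n) (Fin n) ℝ) :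
    frobNorm (∑ k ∈ s, B k) ≤ ∑ k ∈ s, frobNorm (B k) := by
  rw [frobNorm_eq, map_sum]
  exact (norm_sum_le _ _).trans (le_of_eq (by simp [frobNorm_eq]))

lemma abs_entry_le_frobNorm (A : Matrix (Fin n) (Fin n) ℝ) (i j : Fin n) :
    |A i j| ≤ frobNorm A := by
  rw [frobNorm_eq, EuclideanSpace.norm_eq]
  rw [← Real.sqrt_sq_eq_abs]
  apply Real.sqrt_le_sqrt
  have : (A i j) ^ 2 = ‖toE A (i, j)‖ ^ 2 := by simp [toE_apply, sq_abs]
  rw [this]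
  exact Finset.single_le_sum (fun p _ => sq_nonneg ‖toE A p‖) (Finset.mem_univ (i, j))

lemma frobNorm_eq_zero_iff (A : Matrix (Fin n) (Fin n) ℝ) : frobNorm A = 0 ↔ A = 0 := by
  rw [frobNorm_eq, norm_eq_zero]
  constructor
  · intro h
    ext i j
    have := congrArg (fun v => v (i, j)) h
    simpa [toE_apply] using this
  · rintro rfl; simp

/-- Additivity of the sampling operator. -/
lemma QOp_add (n m : ℕ) (ω : Fin m → Idx n) (A B : Matrix (Fin n) (Fin n) ℝ) :
    QOp n m ω (A + B) = QOp n m ω A + QOp n m ω B := by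
  simp only [QOp, frob_add_left, add_smul, Finset.sum_add_distrib, smul_add]
  abel

lemma QOp_smul (n m : ℕ) (ω : Fin m → Idx n) (c : ℝ) (A : Matrix (Fin n) (Fin n) ℝ) :
    QOp n m ω (c • A) = c • QOp n m ω A := by
  simp only [QOp, frob_smul_left, mul_smul, ← Finset.smul_sum]
  rw [smul_add, smul_comm]

lemma QAdj_add (n m : ℕ) (ω : Fin m → Idx n) (A B : Matrix (Fin n) (Fin n) ℝ) :
    QAdj n m ω (A + B) = QAdj n m ω A + QAdj n m ω B := by
  simp only [QAdj, frob_add_left, add_smul, Finset.sum_add_distrib, smul_add]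
  abel

lemma QAdj_smul (n m : ℕ) (ω : Fin m → Idx n) (c : ℝ) (A : Matrix (Fin n) (Fin n) ℝ) :
    QAdj n m ω (c • A) = c • QAdj n m ω A := by
  simp only [QAdj, frob_smul_left, mul_smul, ← Finset.smul_sum]
  rw [smul_add, smul_comm]

/-- Adjoint identity. -/
lemma frob_QAdj (n m : ℕ) (ω : Fin m → Idx n) (X Z : Matrix (Fin n) (Fin n) ℝ) :
    frob X (QAdj n m ω Z) = frob (QOp n m ω X) Z := by
  rw [frob_comm (QOp n m ω X) Z]
  simp only [QAdj, QOp, frob_add_right, frob_smul_right, frob_sum_right]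
  congr 1
  · congr 1
    exact Finset.sum_congr rfl fun ℓ _ => mul_comm _ _
  · exact Finset.sum_congr rfl fun i _ => mul_comm _ _

/-- From an operator-norm bound on symmetric inputs, deduce the pointwise bound. -/
lemma opNormSym_bound (f : Matrix (Fin n) (Fin n) ℝ → Matrix (Fin n) (Fin n) ℝ)
    (hadd : ∀ A B, f (A + B) = f A + f B)
    (hsmul : ∀ (c : ℝ) A, f (c • A) = c • f A)
    {c : ℝ} (h : opNormSym n f ≤ c)
    (X : Matrix (Fin n) (Fin n) ℝ) (hX : X.IsSymm) :
    frobNorm (f X) ≤ c * frobNorm X := by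
  set fL : Matrix (Fin n) (Fin n) ℝ →ₗ[ℝ] Matrix (Fin n) (Fin n) ℝ :=
    { toFun := f, map_add' := hadd, map_smul' := hsmul } with hfL
  have hf : ∀ A, f A = fL A := fun A => rfl
  -- A uniform bound proving the sup set is bounded above
  set C : ℝ := ∑ i : Fin n, ∑ j : Fin n, frobNorm (f (Matrix.single i j 1)) with hC
  have hbound : ∀ W : Matrix (Fin n) (Fin n) ℝ, frobNorm W ≤ 1 → frobNorm (f W) ≤ C := by
    intro W hW
    have hWsum : W = ∑ i : Fin n, ∑ j : Fin n, (W i j) • Matrix.single i j 1 := by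
      conv_lhs => rw [Matrix.matrix_eq_sum_single W]
      apply Finset.sum_congr rfl; intro i _
      apply Finset.sum_congr rfl; intro j _
      rw [Matrix.smul_single, smul_eq_mul, mul_one]
    calc frobNorm (f W) = frobNorm (∑ i : Fin n, ∑ j : Fin n,
            (W i j) • fL (Matrix.single i j 1)) := by
          conv_lhs => rw [hWsum]
          rw [hf, map_sum]
          simp only [map_sum, LinearMap.map_smul]
      _ ≤ ∑ i : Fin n, frobNorm (∑ j : Fin n,
            (W i j) • fL (Matrix.single i j 1)) := frobNorm_sum_le _ _
      _ ≤ ∑ i : Fin n, ∑ j : Fin n,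
            frobNorm ((W i j) • fL (Matrix.single i j 1)) :=
          Finset.sum_le_sum fun i _ => frobNorm_sum_le _ _
      _ ≤ C := by
          rw [hC]
          apply Finset.sum_le_sum; intro i _
          apply Finset.sum_le_sum; intro j _
          rw [frobNorm_smul, ← hf]
          have h1 : |W i j| ≤ 1 := (abs_entry_le_frobNorm W i j).trans hW
          nlinarith [frobNorm_nonneg (f (Matrix.single i j 1)), abs_nonneg (W i j)]
  have hBdd : BddAbove {c : ℝ | ∃ X : Matrix (Fin n) (Fin n) ℝ,
      X.IsSymm ∧ frobNorm X ≤ 1 ∧ c = frobNorm (f X)} := by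
    refine ⟨C, ?_⟩
    rintro x ⟨Z, _, hZ1, rfl⟩
    exact hbound Z hZ1
  by_cases h0 : frobNorm X = 0
  · have hX0 : X = 0 := (frobNorm_eq_zero_iff X).mp h0
    subst hX0
    have : f 0 = 0 := by
      have := hsmul 0 0; simpa using this
    rw [this, h0]
    simp [(frobNorm_eq_zero_iff (0 : Matrix (Fin n) (Fin n) ℝ)).mpr rfl]
  · have ha : 0 < frobNorm X := lt_of_le_of_ne (frobNorm_nonneg X) (Ne.symm h0)
    set u := (frobNorm X)⁻¹ • X with hu
    have hus : u.IsSymm := by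
      rw [hu, Matrix.IsSymm, Matrix.transpose_smul, hX]
    have hun : frobNorm u ≤ 1 := by
      rw [hu, frobNorm_smul, abs_of_pos (inv_pos.mpr ha)]
      rw [inv_mul_cancel₀ (ne_of_gt ha)]
    have hmem : frobNorm (f u) ∈ {c : ℝ | ∃ X : Matrix (Fin n) (Fin n) ℝ,
        X.IsSymm ∧ frobNorm X ≤ 1 ∧ c = frobNorm (f X)} := ⟨u, hus, hun, rfl⟩
    have hle : frobNorm (f u) ≤ c := (le_csSup hBdd hmem).trans h
    have hfu : frobNorm (f u) = (frobNorm X)⁻¹ * frobNorm (f X) := by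
      rw [hu, hsmul, frobNorm_smul, abs_of_pos (inv_pos.mpr ha)]
    rw [hfu] at hle
    calc frobNorm (f X) = frobNorm X * ((frobNorm X)⁻¹ * frobNorm (f X)) := by
          field_simp
      _ ≤ frobNorm X * c := by
          apply mul_le_mul_of_nonneg_left hle ha.le
      _ = c * frobNorm X := mul_comm _ _

end Helpers

/-- null space property: let `T = T_Y` be the tangent space at a
symmetric rank-`r` matrix `Y`, with orthogonal projections `P_T` and
`P_{T⊥} = Id − P_T`. If `‖P_T Q_Ω* P_T − P_T‖_{S∞} ≤ 2/5`,
`‖Q_Ω‖_{S∞} ≤ 20 L √(log n / m) + 1` and `L √(log n / m) ≥ 1`, then every symmetric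
`η` with `Q_Ω(η) = 0` satisfies `‖η‖_F ≤ 21√5 · L √(log n / m) · ‖P_{T⊥}(η)‖_F`. -/
theorem null_space_property (n m r : ℕ)
    (Y : Matrix (Fin n) (Fin n) ℝ) (hY : Y.IsSymm) (hYr : Y.rank = r)
    (PT : Matrix (Fin n) (Fin n) ℝ →ₗ[ℝ] Matrix (Fin n) (Fin n) ℝ)
    (hPT : IsOrthProjOnto (tangentSpace Y) PT)
    (ω : Fin m → Idx n)
    (h1 : opNormSym n (fun X => PT (QAdj n m ω (PT X)) - PT X) ≤ 2 / 5)
    (h2 : opNormSym n (QOp n m ω) ≤ 20 * Lr n * Real.sqrt (Real.log n / m) + 1)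
    (h3 : 1 ≤ Lr n * Real.sqrt (Real.log n / m)) :
    ∀ η : Matrix (Fin n) (Fin n) ℝ, η.IsSymm → QOp n m ω η = 0 →
      frobNorm η ≤ 21 * Real.sqrt 5 * (Lr n * Real.sqrt (Real.log n / m))
        * frobNorm (η - PT η) := by
  intro η hη hQη
  set t := Lr n * Real.sqrt (Real.log n / m) with htdef
  set a := frobNorm (PT η) with ha
  set b := frobNorm (η - PT η) with hb
  have ha0 : 0 ≤ a := frobNorm_nonneg _
  have hb0 : 0 ≤ b := frobNorm_nonneg _
  -- PT η is symmetric
  obtain ⟨Z, hZ⟩ := hPT.1 η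
  have hPTsym : (PT η).IsSymm := by
    rw [hZ, Matrix.IsSymm, Matrix.transpose_add, Matrix.transpose_mul, Matrix.transpose_mul,
      Matrix.transpose_transpose, hY.eq, add_comm]
  have hsubsym : (η - PT η).IsSymm := by
    rw [Matrix.IsSymm, Matrix.transpose_sub, hη.eq, hPTsym.eq]
  have hfix : PT (PT η) = PT η := hPT.2.1 _ (hPT.1 η)
  -- bound on the residual operator applied to PT η
  set D := PT (QAdj n m ω (PT η)) - PT η with hDdef
  have hDn : frobNorm D ≤ 2 / 5 * a := by
    have hfadd : ∀ A B : Matrix (Fin n) (Fin n) ℝ,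
        (fun X => PT (QAdj n m ω (PT X)) - PT X) (A + B)
          = (fun X => PT (QAdj n m ω (PT X)) - PT X) A
            + (fun X => PT (QAdj n m ω (PT X)) - PT X) B := by
      intro A B
      simp only [map_add, QAdj_add]
      abel
    have hfsmul : ∀ (c : ℝ) (A : Matrix (Fin n) (Fin n) ℝ),
        (fun X => PT (QAdj n m ω (PT X)) - PT X) (c • A)
          = c • (fun X => PT (QAdj n m ω (PT X)) - PT X) A := by
      intro c A
      simp only [LinearMap.map_smul, QAdj_smul, smul_sub]
    have h := opNormSym_bound _ hfadd hfsmul h1 (PT η) hPTsym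
    simp only [hfix] at h
    rw [← hDdef] at h
    linarith [h, mul_comm (2/5 : ℝ) a]
  -- key inner product lower bound
  have hsplit : PT (QAdj n m ω (PT η)) = D + PT η := by
    rw [hDdef]; abel
  have hs1 : 3 / 5 * a ^ 2 ≤ frob (PT η) (PT (QAdj n m ω (PT η))) := by
    have hcs : |frob (PT η) D| ≤ a * frobNorm D := by
      have := abs_frob_le (PT η) D
      rwa [← ha] at this
    have h2' : a * frobNorm D ≤ a * (2 / 5 * a) := mul_le_mul_of_nonneg_left hDn ha0
    have hfr : frob (PT η) (PT (QAdj n m ω (PT η))) = frob (PT η) D + a ^ 2 := by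
      rw [hsplit, frob_add_right, frob_self, ha]
    have hlow : -(a * (2 / 5 * a)) ≤ frob (PT η) D := by
      have := neg_abs_le (frob (PT η) D)
      linarith
    nlinarith [hlow, hfr]
  -- move PT across, use adjoint
  have hsa : frob (PT η) (PT (QAdj n m ω (PT η))) = frob (PT η) (QAdj n m ω (PT η)) := by
    rw [← hPT.2.2 (PT η) (QAdj n m ω (PT η)), hfix]
  have hadj : frob (PT η) (QAdj n m ω (PT η)) = frob (QOp n m ω (PT η)) (PT η) :=
    frob_QAdj n m ω (PT η) (PT η)
  -- null space: QOp (PT η) = - QOp (η - PT η)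
  have hQneg : QOp n m ω (PT η) = - QOp n m ω (η - PT η) := by
    have hsum : QOp n m ω (η - PT η) + QOp n m ω (PT η) = 0 := by
      rw [← QOp_add, sub_add_cancel, hQη]
    exact eq_neg_of_add_eq_zero_right hsum
  -- bound using operator norm of QOp
  have hQb : frobNorm (QOp n m ω (η - PT η)) ≤ (20 * t + 1) * b := by
    have h := opNormSym_bound (QOp n m ω) (QOp_add n m ω) (QOp_smul n m ω) h2
      (η - PT η) hsubsym
    rw [← hb] at h
    calc frobNorm (QOp n m ω (η - PT η)) ≤ (20 * Lr n * Real.sqrt (Real.log n / m) + 1) * b := h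
      _ = (20 * t + 1) * b := by rw [htdef]; ring
  have key : 3 / 5 * a ^ 2 ≤ (20 * t + 1) * b * a := by
    have hstep : frob (QOp n m ω (PT η)) (PT η) ≤ (20 * t + 1) * b * a := by
      rw [hQneg, frob_neg_left]
      have h1' : -(frob (QOp n m ω (η - PT η)) (PT η))
          ≤ |frob (QOp n m ω (η - PT η)) (PT η)| := neg_le_abs _
      have h2' := abs_frob_le (QOp n m ω (η - PT η)) (PT η)
      rw [← ha] at h2'
      have h3' : frobNorm (QOp n m ω (η - PT η)) * a ≤ (20 * t + 1) * b * a :=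
        mul_le_mul_of_nonneg_right hQb ha0
      linarith
    calc 3 / 5 * a ^ 2 ≤ frob (PT η) (PT (QAdj n m ω (PT η))) := hs1
      _ = frob (QOp n m ω (PT η)) (PT η) := by rw [hsa, hadj]
      _ ≤ (20 * t + 1) * b * a := hstep
  -- deduce a ≤ 35 t b
  have hab : a ≤ 35 * t * b := by
    rcases eq_or_lt_of_le ha0 with h | h
    · rw [← h]
      nlinarith [h3, hb0]
    · nlinarith [key, h3, hb0, mul_nonneg hb0 h.le,
        mul_nonneg (mul_nonneg (sub_nonneg.mpr h3) hb0) h.le]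
  -- triangle inequality
  have htri : frobNorm η ≤ a + b := by
    have hdecomp : η = PT η + (η - PT η) := by abel
    calc frobNorm η = frobNorm (PT η + (η - PT η)) := by rw [← hdecomp]
      _ ≤ a + b := frobNorm_add_le _ _
  have hsqrt5 : (2 : ℝ) ≤ Real.sqrt 5 := by
    have h4 : (2 : ℝ) = Real.sqrt 4 := by
      rw [show (4 : ℝ) = 2 ^ 2 by norm_num, Real.sqrt_sq (by norm_num : (0:ℝ) ≤ 2)]
    rw [h4]
    exact Real.sqrt_le_sqrt (by norm_num)
  have ht0 : (0 : ℝ) ≤ t := le_trans zero_le_one h3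
  nlinarith [htri, hab, hsqrt5, h3, hb0, mul_nonneg (sub_nonneg.mpr h3) hb0,
    mul_nonneg ht0 hb0,
    mul_nonneg (mul_nonneg (sub_nonneg.mpr hsqrt5) ht0) hb0]


end EDG
end
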